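/- For every natural number k there exists a ℂ-algebra isomorphism i : ℂl_{2k} → ℂ(2^k) such that i(τ(φ)) = (i(φ))* for every φ ∈ ℂl_{2k}, where * denotes the conjugate-transpose of a matrix; that is, under a suitable isomorphism with the matrix algebra, the antiautomorphism τ is translated as the conjugate transpose. -/

import Mathlib

open scoped TensorProduct

/-- The negative-definite quadratic form `Q x = -‖x‖²` on `ℝⁿ`. -/
noncomputable def Qr (n : ℕ) : QuadraticForm ℝ (Fin n → ℝ) :=
  QuadraticMap.weightedSumSquares ℝ (fun _ : Fin n => (-1 : ℝ))

/-- The real Clifford algebra `Cl_n` of `ℝⁿ` with `Q x = -‖x‖²`. -/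
noncomputable abbrev Cl (n : ℕ) := CliffordAlgebra (Qr n)

/-- The complexified Clifford algebra `ℂl_n = ℂ ⊗_ℝ Cl_n`. -/
noncomputable abbrev CliffC (n : ℕ) := ℂ ⊗[ℝ] Cl n

/-- The canonical embedding `ℝⁿ → ℂl_n`. -/
noncomputable def iotaC (n : ℕ) (v : Fin n → ℝ) : CliffC n :=
  (1 : ℂ) ⊗ₜ[ℝ] (CliffordAlgebra.ι (Qr n) v)

/-- The canonical inclusion `Cl_n → ℂl_n`. -/
noncomputable def inclC (n : ℕ) : Cl n →ₐ[ℝ] CliffC n :=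
  Algebra.TensorProduct.includeRight

/-- The conjugate-linear antiautomorphism `τ` of `ℂl_n`: the composite of complex
conjugation of the scalars, the grade involution and reversal.  It satisfies
`τ (a e_{i₁} ⋯ e_{i_r}) = (-1)^r ā e_{i_r} ⋯ e_{i₁}`, in particular `τ (ι v) = -ι v`
for `v ∈ ℝⁿ`, `τ (x * y) = τ y * τ x` and `τ ∘ τ = id`. -/
noncomputable def tau (n : ℕ) : CliffC n →ₗ[ℝ] CliffC n :=
  TensorProduct.map (Complex.conjAe.toLinearMap)
    ((CliffordAlgebra.reverse (Q := Qr n)).comp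
      (CliffordAlgebra.involute (Q := Qr n)).toLinearMap)

/-!
Jordan–Wigner construction. From skew-Hermitian matrices `γ₁, …, γₙ` on `ι` that satisfy the
relations of `Cl_n` and generate all matrices, the matrices `σ₃ ⊗ γₐ`, `iσ₁ ⊗ 1`, `iσ₂ ⊗ 1`
on `Fin 2 × ι` do the same for `Cl_{n+2}`: `σ₃ ⊗ 1` is a multiple of the product of the two new
generators, so the generated algebra contains `1 ⊗ γₐ`, `iσ₁ ⊗ 1` and `iσ₂ ⊗ 1`, hence every
`A ⊗ B`. Starting from `1 × 1` matrices this gives `2k` such matrices of size `2 ^ k`; by the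
universal property they define a surjective `ℂ`-algebra map `ℂl_{2k} → ℂ(2 ^ k)`, which is
bijective because both sides have dimension `4 ^ k` (`Cl_n` is isomorphic to `Λ ℝⁿ` as a vector
space). Finally `τ` and `ᴴ` are both conjugate-linear antimultiplicative and agree on the
generators, where both give `-γₐ`.
-/

open scoped Matrix Kronecker
open Matrix

namespace Matrix

theorem neg_kronecker {R l m n p : Type*} [Ring R] (A : Matrix l m R) (B : Matrix n p R) :
    (-A) ⊗ₖ B = -(A ⊗ₖ B) := by
  ext; simp

theorem kronecker_neg {R l m n p : Type*} [Ring R] (A : Matrix l m R) (B : Matrix n p R) :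
    A ⊗ₖ (-B) = -(A ⊗ₖ B) := by
  ext; simp

variable {R m n : Type*} [CommSemiring R] [Fintype m] [Fintype n] [DecidableEq m] [DecidableEq n]

variable (R m n) in
def kroneckerOneAlgHom : Matrix m m R →ₐ[R] Matrix (m × n) (m × n) R where
  toFun A := A ⊗ₖ 1
  map_one' := one_kronecker_one
  map_mul' A B := by rw [← mul_kronecker_mul, mul_one]
  map_zero' := zero_kronecker _
  map_add' A B := add_kronecker _ _ _
  commutes' r := by simp [Algebra.algebraMap_eq_smul_one, smul_kronecker]

variable (R m n) in
def oneKroneckerAlgHom : Matrix n n R →ₐ[R] Matrix (m × n) (m × n) R where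
  toFun B := 1 ⊗ₖ B
  map_one' := one_kronecker_one
  map_mul' A B := by rw [← mul_kronecker_mul, mul_one]
  map_zero' := kronecker_zero _
  map_add' A B := kronecker_add _ _ _
  commutes' r := by simp [Algebra.algebraMap_eq_smul_one, kronecker_smul]

theorem _root_.Subalgebra.eq_top_of_kronecker_mem (S : Subalgebra R (Matrix (m × n) (m × n) R))
    (hleft : ∀ A, A ⊗ₖ (1 : Matrix n n R) ∈ S) (hright : ∀ B, (1 : Matrix m m R) ⊗ₖ B ∈ S) :
    S = ⊤ := by
  refine Algebra.eq_top_iff.2 fun M => ?_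
  rw [matrix_eq_sum_single M]
  refine Subalgebra.sum_mem _ fun x _ => Subalgebra.sum_mem _ fun y _ => ?_
  have hsingle : single x y (M x y) =
      (single x.1 y.1 (M x y) ⊗ₖ 1) * (1 ⊗ₖ single x.2 y.2 1) := by
    rw [← mul_kronecker_mul, mul_one, one_mul, single_kronecker_single, mul_one]
  rw [hsingle]
  exact mul_mem (hleft _) (hright _)

end Matrix

namespace ComplexClifford

theorem Qr_apply {n : ℕ} (v : Fin n → ℝ) : Qr n v = ∑ a, -(v a * v a) := by
  simp [Qr]

/-- The images of the standard basis of `ℝⁿ` under an algebra map out of `Cl_n`. -/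
structure IsCliffordFamily {A : Type*} [Ring A] {n : ℕ} (γ : Fin n → A) : Prop where
  mul_self : ∀ a, γ a * γ a = -1
  anticomm : ∀ a b, a ≠ b → γ a * γ b + γ b * γ a = 0

section Lift

variable {A : Type*} [Ring A] [Algebra ℝ A] {n : ℕ} {γ : Fin n → A}

variable (γ) in
noncomputable def cliffordVector : (Fin n → ℝ) →ₗ[ℝ] A :=
  ∑ a, (LinearMap.proj a).smulRight (γ a)

theorem cliffordVector_apply (v : Fin n → ℝ) : cliffordVector γ v = ∑ a, v a • γ a := by
  simp [cliffordVector]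

theorem IsCliffordFamily.cliffordVector_mul_self (hγ : IsCliffordFamily γ) (v : Fin n → ℝ) :
    cliffordVector γ v * cliffordVector γ v = algebraMap ℝ A (Qr n v) := by
  have hdiag : ∀ a, ∑ b, (v a * v b) • (γ a * γ b + γ b * γ a) = (-2 * (v a * v a)) • 1 := by
    intro a
    rw [Finset.sum_eq_single a (fun b _ hb => by rw [hγ.anticomm a b (Ne.symm hb), smul_zero])
      (by simp), hγ.mul_self]
    module
  have hP : cliffordVector γ v * cliffordVector γ v = ∑ a, ∑ b, (v a * v b) • (γ a * γ b) := by
    simp only [cliffordVector_apply, Finset.sum_mul_sum, smul_mul_smul_comm]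
  have hdouble : ∑ a, ∑ b, (v a * v b) • (γ a * γ b) + ∑ a, ∑ b, (v a * v b) • (γ a * γ b)
      = algebraMap ℝ A (Qr n v) + algebraMap ℝ A (Qr n v) := by
    calc _ = ∑ a, ∑ b, (v a * v b) • (γ a * γ b + γ b * γ a) := by
          conv_lhs => arg 2; rw [Finset.sum_comm]
          simp only [← Finset.sum_add_distrib, smul_add, mul_comm (v _) (v _)]
      _ = _ := by
        simp only [hdiag, Qr_apply, map_sum, Algebra.algebraMap_eq_smul_one,
          ← Finset.sum_add_distrib, ← add_smul]
        congr 1; ext a; ring_nf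
  rw [hP]
  simpa [← two_smul ℝ] using hdouble

variable (hγ : IsCliffordFamily γ)

noncomputable def cliffordLift : Cl n →ₐ[ℝ] A :=
  CliffordAlgebra.lift (Qr n) ⟨cliffordVector γ, hγ.cliffordVector_mul_self⟩

theorem cliffordLift_ι (v : Fin n → ℝ) :
    cliffordLift hγ (CliffordAlgebra.ι (Qr n) v) = cliffordVector γ v :=
  CliffordAlgebra.lift_ι_apply _ _ _

theorem cliffordLift_ι_single (a : Fin n) :
    cliffordLift hγ (CliffordAlgebra.ι (Qr n) (Pi.single a 1)) = γ a := by
  simp [cliffordLift_ι, cliffordVector_apply, Pi.single_apply]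

end Lift

theorem finrank_Cl (n : ℕ) : Module.finrank ℝ (Cl n) = 2 ^ n := by
  rw [(CliffordAlgebra.equivExterior (Qr n)).finrank_eq,
    Module.finrank_eq_card_basis (Pi.basisFun ℝ (Fin n)).ExteriorAlgebra, Fintype.card_finset,
    Fintype.card_fin]

theorem finrank_CliffC (n : ℕ) : Module.finrank ℂ (CliffC n) = 2 ^ n := by
  rw [Module.finrank_baseChange, finrank_Cl]

section Complexification

variable {A : Type*} [Ring A] [Algebra ℂ A] {n : ℕ}
  {γ : Fin n → A} (hγ : IsCliffordFamily γ)

noncomputable def complexCliffordLift : CliffC n →ₐ[ℂ] A :=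
  AlgHom.liftEquiv ℝ ℂ (Cl n) A (cliffordLift hγ)

theorem complexCliffordLift_tmul (z : ℂ) (x : Cl n) :
    complexCliffordLift hγ (z ⊗ₜ x) = z • cliffordLift hγ x :=
  rfl

theorem complexCliffordLift_surjective (htop : Algebra.adjoin ℂ (Set.range γ) = ⊤) :
    Function.Surjective (complexCliffordLift hγ) := by
  rw [← AlgHom.range_eq_top, eq_top_iff, ← htop]
  refine Algebra.adjoin_le ?_
  rintro _ ⟨a, rfl⟩
  exact ⟨1 ⊗ₜ CliffordAlgebra.ι (Qr n) (Pi.single a 1),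
    (complexCliffordLift_tmul hγ _ _).trans (by rw [cliffordLift_ι_single, one_smul])⟩

theorem complexCliffordLift_bijective (hdim : Module.finrank ℂ A = 2 ^ n)
    (htop : Algebra.adjoin ℂ (Set.range γ) = ⊤) :
    Function.Bijective (complexCliffordLift hγ) := by
  have : FiniteDimensional ℂ (CliffC n) :=
    Module.finite_of_finrank_pos (by rw [finrank_CliffC]; positivity)
  have : FiniteDimensional ℂ A := Module.finite_of_finrank_pos (by rw [hdim]; positivity)
  have hsurj := complexCliffordLift_surjective hγ htop
  exact ⟨(LinearMap.injective_iff_surjective_of_finrank_eq_finrank (by rw [finrank_CliffC, hdim])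
    (f := (complexCliffordLift hγ).toLinearMap)).2 hsurj, hsurj⟩

variable [StarRing A] [StarModule ℂ A]

theorem cliffordLift_reverse_involute (hstar : ∀ a, star (γ a) = -γ a) (x : Cl n) :
    cliffordLift hγ (CliffordAlgebra.reverse (CliffordAlgebra.involute x)) =
      star (cliffordLift hγ x) := by
  induction x using CliffordAlgebra.induction with
  | algebraMap r =>
    rw [AlgHom.commutes, CliffordAlgebra.reverse.commutes, AlgHom.commutes,
      ← algebraMap_star_comm, star_trivial]
  | ι v =>
    simp only [CliffordAlgebra.involute_ι, map_neg, CliffordAlgebra.reverse_ι, cliffordLift_ι,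
      cliffordVector_apply, star_sum, star_smul, star_trivial, hstar, smul_neg,
      Finset.sum_neg_distrib]
  | mul x y hx hy => simp only [map_mul, CliffordAlgebra.reverse.map_mul, hx, hy, star_mul]
  | add x y hx hy => simp only [map_add, hx, hy, star_add]

theorem complexCliffordLift_tau (hstar : ∀ a, star (γ a) = -γ a) (φ : CliffC n) :
    complexCliffordLift hγ (tau n φ) = star (complexCliffordLift hγ φ) := by
  induction φ using TensorProduct.induction_on with
  | zero => simp
  | tmul z x =>
    simp only [tau, TensorProduct.map_tmul, LinearMap.comp_apply, AlgHom.toLinearMap_apply,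
      complexCliffordLift_tmul, star_smul]
    rw [cliffordLift_reverse_involute hγ hstar x]
    rfl
  | add x y hx hy => simp only [map_add, hx, hy, star_add]

end Complexification

section Pauli

/-- `iσ₁` and `iσ₂` for the Pauli matrices `σ₁`, `σ₂`; `pauliZ` is `σ₃`. -/
def pauliGen : Fin 2 → Matrix (Fin 2) (Fin 2) ℂ :=
  ![!![0, Complex.I; Complex.I, 0], !![0, 1; -1, 0]]

def pauliZ : Matrix (Fin 2) (Fin 2) ℂ := !![1, 0; 0, -1]

theorem isCliffordFamily_pauliGen : IsCliffordFamily pauliGen where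
  mul_self a := by
    fin_cases a <;> simp [pauliGen, one_fin_two]
  anticomm a b hab := by
    fin_cases a <;> fin_cases b <;> simp only [ne_eq, not_true_eq_false] at hab <;>
      ext i j <;> fin_cases i <;> fin_cases j <;> simp [pauliGen]

theorem conjTranspose_pauliGen (a : Fin 2) : (pauliGen a)ᴴ = -pauliGen a := by
  fin_cases a <;> ext i j <;> fin_cases i <;> fin_cases j <;> simp [pauliGen]

theorem pauliZ_mul_self : pauliZ * pauliZ = 1 := by
  simp [pauliZ, one_fin_two]

theorem conjTranspose_pauliZ : pauliZᴴ = pauliZ := by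
  ext i j; fin_cases i <;> fin_cases j <;> simp [pauliZ]

theorem pauliZ_mul_add_mul_pauliZ (a : Fin 2) :
    pauliZ * pauliGen a + pauliGen a * pauliZ = 0 := by
  fin_cases a <;> ext i j <;> fin_cases i <;> fin_cases j <;> simp [pauliZ, pauliGen]

theorem pauliZ_eq_smul_mul : pauliZ = Complex.I • (pauliGen 0 * pauliGen 1) := by
  simp [pauliZ, pauliGen]

theorem adjoin_range_pauliGen : Algebra.adjoin ℂ (Set.range pauliGen) = ⊤ := by
  refine Algebra.eq_top_iff.2 fun m => ?_
  have hgen : ∀ a, pauliGen a ∈ Algebra.adjoin ℂ (Set.range pauliGen) :=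
    fun a => Algebra.subset_adjoin ⟨a, rfl⟩
  have hm : m = ((m 0 0 + m 1 1) / 2) • (1 : Matrix (Fin 2) (Fin 2) ℂ)
      + (-Complex.I * (m 0 1 + m 1 0) / 2) • pauliGen 0 + ((m 0 1 - m 1 0) / 2) • pauliGen 1
      + (Complex.I * (m 0 0 - m 1 1) / 2) • (pauliGen 0 * pauliGen 1) := by
    ext i j
    fin_cases i <;> fin_cases j <;> simp [pauliGen] <;> ring_nf <;> simp <;> ring
  rw [hm]
  exact add_mem (add_mem (add_mem (Subalgebra.smul_mem _ (one_mem _) _)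
    (Subalgebra.smul_mem _ (hgen 0) _)) (Subalgebra.smul_mem _ (hgen 1) _))
    (Subalgebra.smul_mem _ (mul_mem (hgen 0) (hgen 1)) _)

end Pauli

section Extension

variable {ι : Type*} [DecidableEq ι] {n : ℕ} {γ : Fin n → Matrix ι ι ℂ}

variable (γ) in
def extendFamily : Fin (n + 2) → Matrix (Fin 2 × ι) (Fin 2 × ι) ℂ :=
  Fin.addCases (fun a => pauliZ ⊗ₖ γ a) (fun j => pauliGen j ⊗ₖ 1)

@[simp]
theorem extendFamily_castAdd (a : Fin n) :
    extendFamily γ (Fin.castAdd 2 a) = pauliZ ⊗ₖ γ a :=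
  Fin.addCases_left a

@[simp]
theorem extendFamily_natAdd (j : Fin 2) : extendFamily γ (Fin.natAdd n j) = pauliGen j ⊗ₖ 1 :=
  Fin.addCases_right j

theorem conjTranspose_extendFamily (hγ : ∀ a, (γ a)ᴴ = -γ a) (a : Fin (n + 2)) :
    (extendFamily γ a)ᴴ = -extendFamily γ a := by
  induction a using Fin.addCases with
  | left a => simp [conjTranspose_kronecker, conjTranspose_pauliZ, hγ, kronecker_neg]
  | right j => simp [conjTranspose_kronecker, conjTranspose_pauliGen, neg_kronecker]

variable [Fintype ι]

theorem IsCliffordFamily.extendFamily (hγ : IsCliffordFamily γ) :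
    IsCliffordFamily (extendFamily γ) where
  mul_self a := by
    induction a using Fin.addCases with
    | left a => simp [← mul_kronecker_mul, pauliZ_mul_self, hγ.mul_self, kronecker_neg]
    | right j => simp [← mul_kronecker_mul, isCliffordFamily_pauliGen.mul_self, neg_kronecker]
  anticomm a b hab := by
    induction a using Fin.addCases with
    | left a =>
      induction b using Fin.addCases with
      | left b =>
        simp only [extendFamily_castAdd, ← mul_kronecker_mul, pauliZ_mul_self, ← kronecker_add,
          hγ.anticomm a b (by rintro rfl; exact hab rfl), kronecker_zero]
      | right j =>
        simp only [extendFamily_castAdd, extendFamily_natAdd, ← mul_kronecker_mul, mul_one,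
          one_mul, ← add_kronecker, pauliZ_mul_add_mul_pauliZ, zero_kronecker]
    | right i =>
      induction b using Fin.addCases with
      | left b =>
        simp only [extendFamily_castAdd, extendFamily_natAdd, ← mul_kronecker_mul, mul_one,
          one_mul, ← add_kronecker, add_comm (pauliGen i * pauliZ), pauliZ_mul_add_mul_pauliZ,
          zero_kronecker]
      | right j =>
        simp only [extendFamily_natAdd, ← mul_kronecker_mul, mul_one, ← add_kronecker,
          isCliffordFamily_pauliGen.anticomm i j (by rintro rfl; exact hab rfl), zero_kronecker]

theorem adjoin_range_extendFamily (htop : Algebra.adjoin ℂ (Set.range γ) = ⊤) :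
    Algebra.adjoin ℂ (Set.range (extendFamily γ)) = ⊤ := by
  set S := Algebra.adjoin ℂ (Set.range (extendFamily γ))
  have hgen : ∀ a, extendFamily γ a ∈ S := fun a => Algebra.subset_adjoin ⟨a, rfl⟩
  have hZ : pauliZ ⊗ₖ (1 : Matrix ι ι ℂ) ∈ S := by
    have h : pauliZ ⊗ₖ (1 : Matrix ι ι ℂ) =
        Complex.I • (extendFamily γ (Fin.natAdd n 0) * extendFamily γ (Fin.natAdd n 1)) := by
      rw [extendFamily_natAdd, extendFamily_natAdd, ← mul_kronecker_mul, mul_one,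
        ← smul_kronecker, ← pauliZ_eq_smul_mul]
    rw [h]
    exact S.smul_mem (mul_mem (hgen _) (hgen _)) Complex.I
  have hleft : ∀ A, A ⊗ₖ (1 : Matrix ι ι ℂ) ∈ S := by
    suffices ⊤ ≤ S.comap (kroneckerOneAlgHom ℂ (Fin 2) ι) from fun A => this trivial
    rw [← adjoin_range_pauliGen, Algebra.adjoin_le_iff]
    rintro _ ⟨j, rfl⟩
    change pauliGen j ⊗ₖ (1 : Matrix ι ι ℂ) ∈ S
    rw [← extendFamily_natAdd]
    exact hgen _
  have hright : ∀ B, (1 : Matrix (Fin 2) (Fin 2) ℂ) ⊗ₖ B ∈ S := by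
    suffices ⊤ ≤ S.comap (oneKroneckerAlgHom ℂ (Fin 2) ι) from fun B => this trivial
    rw [← htop, Algebra.adjoin_le_iff]
    rintro _ ⟨a, rfl⟩
    have h : 1 ⊗ₖ γ a = (pauliZ ⊗ₖ 1) * extendFamily γ (Fin.castAdd 2 a) := by
      rw [extendFamily_castAdd, ← mul_kronecker_mul, pauliZ_mul_self, one_mul]
    change 1 ⊗ₖ γ a ∈ S
    rw [h]
    exact mul_mem hZ (hgen _)
  exact Subalgebra.eq_top_of_kronecker_mem S hleft hright

end Extension

theorem exists_cliffordFamily (k : ℕ) :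
    ∃ (ι : Type) (_ : Fintype ι) (_ : DecidableEq ι), Fintype.card ι = 2 ^ k ∧
      ∃ γ : Fin (2 * k) → Matrix ι ι ℂ, IsCliffordFamily γ ∧ (∀ a, (γ a)ᴴ = -γ a) ∧
        Algebra.adjoin ℂ (Set.range γ) = ⊤ := by
  induction k with
  | zero =>
    refine ⟨Unit, inferInstance, inferInstance, rfl, Fin.elim0,
      ⟨fun a => a.elim0, fun a => a.elim0⟩, fun a => a.elim0, Algebra.eq_top_iff.2 fun M => ?_⟩
    have hM : M = algebraMap ℂ _ (M () ()) := by
      ext i j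
      simp [algebraMap_eq_diagonal, Subsingleton.elim i j]
    rw [hM]
    exact Subalgebra.algebraMap_mem _ _
  | succ k ih =>
    obtain ⟨ι, _, _, hcard, γ, hγ, hstar, htop⟩ := ih
    refine ⟨Fin 2 × ι, inferInstance, inferInstance, ?_, extendFamily γ, hγ.extendFamily,
      conjTranspose_extendFamily hstar, adjoin_range_extendFamily htop⟩
    rw [Fintype.card_prod, Fintype.card_fin, hcard, pow_succ']

end ComplexClifford

open ComplexClifford

open scoped Matrix in
/-- For every `k` there is a `ℂ`-algebra isomorphism `i : ℂl_{2k} ≃ ℂ(2^k)` under which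
the conjugate-linear antiautomorphism `τ` corresponds to the conjugate transpose of
matrices: `i (τ φ) = (i φ)ᴴ` for all `φ`. -/
theorem stmt9 (k : ℕ) :
    ∃ i : CliffC (2 * k) ≃ₐ[ℂ] Matrix (Fin (2 ^ k)) (Fin (2 ^ k)) ℂ,
      ∀ φ : CliffC (2 * k), i (tau (2 * k) φ) = (i φ)ᴴ := by
  obtain ⟨ι, _, _, hcard, γ, hγ, hstar, htop⟩ := exists_cliffordFamily k
  have hdim : Module.finrank ℂ (Matrix ι ι ℂ) = 2 ^ (2 * k) := by
    rw [Module.finrank_matrix, Module.finrank_self, hcard, mul_one, ← pow_add, two_mul]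
  let F := AlgEquiv.ofBijective _ (complexCliffordLift_bijective hγ hdim htop)
  refine ⟨F.trans (reindexAlgEquiv ℂ ℂ (Fintype.equivFinOfCardEq hcard)), fun φ => ?_⟩
  simp [F, complexCliffordLift_tau hγ hstar, star_eq_conjTranspose]
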